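/- For any η-polarized, tie-free ensemble ρ of K-class classifiers, L(h_ρ^MV) ≤ η·[(1 + (K−2)/(2(K−1)))·E_ρ[L(h)] − (1/2)·E_{ρ²}[D(h,h')]]. -/

import Mathlib

open MeasureTheory

open Finset in
lemma kclass_aux_ineq (K : ℕ) (hK : 2 ≤ K) (p : Fin K → ℝ) (hp : ∀ k, 0 ≤ p k)
    (hsum : ∑ k, p k = 1) (Y : Fin K) :
    (1 - p Y) ^ 2 + (1 - ∑ k, (p k) ^ 2) / 2 ≤
      (1 + ((K : ℝ) - 2) / (2 * ((K : ℝ) - 1))) * (1 - p Y) := by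
  have hK1 : (1 : ℝ) ≤ (K : ℝ) - 1 := by
    have : (2 : ℝ) ≤ (K : ℝ) := by exact_mod_cast hK
    linarith
  set W : ℝ := 1 - p Y with hW
  have hWsum : ∑ k ∈ univ.erase Y, p k = W := by
    have := Finset.sum_erase_add univ p (Finset.mem_univ Y)
    rw [hsum] at this; linarith
  have hS : ∑ k, (p k) ^ 2 = p Y ^ 2 + ∑ k ∈ univ.erase Y, (p k) ^ 2 := by
    have := Finset.sum_erase_add univ (fun k => (p k) ^ 2) (Finset.mem_univ Y)
    linarith
  have hCS : W ^ 2 ≤ ((K : ℝ) - 1) * ∑ k ∈ univ.erase Y, (p k) ^ 2 := by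
    have h1 := sq_sum_le_card_mul_sum_sq (s := univ.erase Y) (f := p)
    rw [hWsum] at h1
    have hcard : (#(univ.erase Y) : ℝ) = (K : ℝ) - 1 := by
      rw [Finset.card_erase_of_mem (Finset.mem_univ Y)]
      have h1K : 1 ≤ K := by omega
      rw [Finset.card_univ, Fintype.card_fin, Nat.cast_sub h1K]
      norm_num
    calc W ^ 2 ≤ (#(univ.erase Y) : ℝ) * ∑ k ∈ univ.erase Y, (p k) ^ 2 := h1
      _ = ((K : ℝ) - 1) * ∑ k ∈ univ.erase Y, (p k) ^ 2 := by rw [hcard]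
  have hW0 : 0 ≤ W := by
    have : p Y ≤ 1 := by
      rw [← hsum]
      exact Finset.single_le_sum (fun k _ => hp k) (Finset.mem_univ Y)
    linarith
  have hW1 : W ≤ 1 := by have := hp Y; linarith
  have hKpos : (0 : ℝ) < (K : ℝ) - 1 := by linarith
  set S : ℝ := ∑ k ∈ univ.erase Y, (p k) ^ 2 with hSdef
  have hpY : p Y = 1 - W := by rw [hW]; ring
  have hfrac : (W ^ 2 - S) / 2 ≤ ((K : ℝ) - 2) / (2 * ((K : ℝ) - 1)) * W := by
    rw [div_mul_eq_mul_div, div_le_div_iff₀ two_pos (by linarith : (0:ℝ) < 2 * ((K:ℝ)-1))]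
    have hWsq : W ^ 2 ≤ W := by nlinarith
    have hK2 : (0:ℝ) ≤ (K:ℝ) - 2 := by
      have : (2:ℝ) ≤ (K:ℝ) := by exact_mod_cast hK
      linarith
    nlinarith [hCS, mul_nonneg (sub_nonneg.2 hWsq) hK2]
  rw [hS, hpY]
  nlinarith [hfrac]

lemma kclass_toReal_prob_le_one {α : Type*} [MeasurableSpace α] (ν : Measure α)
    [IsProbabilityMeasure ν] (s : Set α) : (ν s).toReal ≤ 1 := by
  have h1 : (ν s).toReal ≤ (ν Set.univ).toReal :=
    ENNReal.toReal_mono (measure_ne_top _ _) (measure_mono (Set.subset_univ _))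
  simpa using h1

lemma kclass_integrable_of_bounded01 {α : Type*} [MeasurableSpace α] (ν : Measure α)
    [IsFiniteMeasure ν] (f : α → ℝ) (hf : Measurable f) (h0 : ∀ a, 0 ≤ f a)
    (h1 : ∀ a, f a ≤ 1) : Integrable f ν := by
  refine (integrable_const (1:ℝ)).mono' hf.aestronglyMeasurable ?_
  filter_upwards with a
  rw [Real.norm_eq_abs, abs_of_nonneg (h0 a)]
  exact h1 a

theorem kclass_eps_bound {Ω H X : Type*} [MeasurableSpace Ω] [MeasurableSpace H]
    (K : ℕ) (hK : 2 ≤ K)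
    (μ : Measure Ω) [IsProbabilityMeasure μ] (ρ : Measure H) [IsProbabilityMeasure ρ]
    (h : H → X → Fin K) (ptX : Ω → X) (ptY : Ω → Fin K) (hMV : X → Fin K)
    (η : ℝ) (hη : 0 ≤ η)
    (W : Ω → ℝ) (hWdef : ∀ ω, W ω = (ρ {c | h c (ptX ω) ≠ ptY ω}).toReal)
    (hjm : MeasurableSet {q : H × Ω | h q.1 (ptX q.2) ≠ ptY q.2})
    (hjm' : MeasurableSet {q : (H × H) × Ω | h q.1.1 (ptX q.2) ≠ h q.1.2 (ptX q.2)})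
    -- η-polarized
    (hpol : (μ {ω | W ω > 1 / 2}).toReal ≤ η * ∫ ω, (W ω) ^ 2 ∂μ)
    -- tie-free, so the majority-vote error is bounded by P(W > 1/2)
    (htiefree : (μ {ω | hMV (ptX ω) ≠ ptY ω}).toReal ≤ (μ {ω | W ω > 1 / 2}).toReal) :
    (μ {ω | hMV (ptX ω) ≠ ptY ω}).toReal ≤
      η * ((1 + ((K : ℝ) - 2) / (2 * ((K : ℝ) - 1))) *
          (∫ c, (μ {ω | h c (ptX ω) ≠ ptY ω}).toReal ∂ρ) -
        (1 / 2) * ∫ p, (μ {ω | h p.1 (ptX ω) ≠ h p.2 (ptX ω)}).toReal ∂(ρ.prod ρ)) := by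
  classical
  set ε : ℝ := ((K : ℝ) - 2) / (2 * ((K : ℝ) - 1)) with hεdef
  -- measurability of sections
  have hA : ∀ ω : Ω, MeasurableSet {q : H × H | h q.1 (ptX ω) ≠ h q.2 (ptX ω)} := by
    intro ω
    exact measurable_prodMk_right hjm'
  have hEq : ∀ (ω : Ω) (c₀ : H), MeasurableSet {c : H | h c (ptX ω) = h c₀ (ptX ω)} := by
    intro ω c₀
    have h1 : MeasurableSet {c : H | h c (ptX ω) ≠ h c₀ (ptX ω)} :=
      measurable_prodMk_right (hA ω)
    have h2 := h1.compl
    convert h2 using 1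
    ext c; simp
  have hk : ∀ (ω : Ω) (k : Fin K), MeasurableSet {c : H | h c (ptX ω) = k} := by
    intro ω k
    by_cases hex : ∃ c₀, h c₀ (ptX ω) = k
    · obtain ⟨c₀, hc₀⟩ := hex
      have := hEq ω c₀
      rw [hc₀] at this
      exact this
    · have : {c : H | h c (ptX ω) = k} = ∅ := by
        ext c; simp only [Set.mem_setOf_eq, Set.mem_empty_iff_false, iff_false]
        exact fun hc => hex ⟨c, hc⟩
      rw [this]; exact MeasurableSet.empty
  set p : Ω → Fin K → ℝ := fun ω k => (ρ {c | h c (ptX ω) = k}).toReal with hpdef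
  set D : Ω → ℝ := fun ω =>
    ((ρ.prod ρ) {q : H × H | h q.1 (ptX ω) ≠ h q.2 (ptX ω)}).toReal with hDdef
  have hpnn : ∀ ω k, 0 ≤ p ω k := fun ω k => ENNReal.toReal_nonneg
  -- p sums to 1
  have hpsum : ∀ ω, ∑ k, p ω k = 1 := by
    intro ω
    have hdisj : Pairwise (Function.onFun Disjoint fun k : Fin K =>
        {c : H | h c (ptX ω) = k}) := by
      intro i j hij
      simp only [Function.onFun, Set.disjoint_left]
      intro c hci hcj
      exact hij (hci ▸ hcj ▸ rfl)
    have hun : (⋃ k, {c : H | h c (ptX ω) = k}) = Set.univ := by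
      ext c; simp
    have h1 : ρ (⋃ k, {c : H | h c (ptX ω) = k}) = ∑' k, ρ {c : H | h c (ptX ω) = k} :=
      measure_iUnion hdisj (hk ω)
    rw [hun, measure_univ, tsum_fintype] at h1
    have h2 : (∑ k, ρ {c : H | h c (ptX ω) = k}).toReal
        = ∑ k, (ρ {c : H | h c (ptX ω) = k}).toReal :=
      ENNReal.toReal_sum (fun k _ => measure_ne_top _ _)
    rw [← h1] at h2
    simpa [hpdef] using h2.symm
  -- W in terms of p
  have hWp : ∀ ω, W ω = 1 - p ω (ptY ω) := by
    intro ω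
    rw [hWdef]
    have hset : {c : H | h c (ptX ω) ≠ ptY ω} = {c : H | h c (ptX ω) = ptY ω}ᶜ := by
      ext c; simp
    rw [hset, prob_compl_eq_one_sub (hk ω (ptY ω)),
      ENNReal.toReal_sub_of_le prob_le_one ENNReal.one_ne_top]
    simp [hpdef]
  -- D in terms of p
  have hDp : ∀ ω, D ω = 1 - ∑ k, (p ω k) ^ 2 := by
    intro ω
    have hset : {q : H × H | h q.1 (ptX ω) ≠ h q.2 (ptX ω)} =
        (⋃ k, ({c : H | h c (ptX ω) = k} ×ˢ {c : H | h c (ptX ω) = k}))ᶜ := by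
      ext ⟨a, b⟩
      simp only [Set.mem_setOf_eq, Set.mem_compl_iff, Set.mem_iUnion, Set.mem_prod,
        not_exists]
      constructor
      · intro hne k ⟨ha, hb⟩
        exact hne (ha.trans hb.symm)
      · intro hall hab
        exact hall (h a (ptX ω)) ⟨rfl, hab ▸ rfl⟩
    have hmeasE : ∀ k : Fin K,
        MeasurableSet ({c : H | h c (ptX ω) = k} ×ˢ {c : H | h c (ptX ω) = k}) :=
      fun k => (hk ω k).prod (hk ω k)
    have hdisj : Pairwise (Function.onFun Disjoint fun k : Fin K =>
        ({c : H | h c (ptX ω) = k} ×ˢ {c : H | h c (ptX ω) = k})) := by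
      intro i j hij
      simp only [Function.onFun, Set.disjoint_left]
      rintro ⟨a, b⟩ ⟨hai, _⟩ ⟨haj, _⟩
      exact hij (hai ▸ haj ▸ rfl)
    have h1 : (ρ.prod ρ) (⋃ k, ({c : H | h c (ptX ω) = k} ×ˢ {c : H | h c (ptX ω) = k}))
        = ∑' k, (ρ.prod ρ) ({c : H | h c (ptX ω) = k} ×ˢ {c : H | h c (ptX ω) = k}) :=
      measure_iUnion hdisj hmeasE
    have hunion_meas : MeasurableSet
        (⋃ k, ({c : H | h c (ptX ω) = k} ×ˢ {c : H | h c (ptX ω) = k})) :=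
      MeasurableSet.iUnion hmeasE
    rw [hDdef]
    simp only
    rw [hset, prob_compl_eq_one_sub hunion_meas,
      ENNReal.toReal_sub_of_le prob_le_one ENNReal.one_ne_top, h1, tsum_fintype,
      ENNReal.toReal_sum (fun k _ => measure_ne_top _ _)]
    have hterm : ∀ k : Fin K,
        ((ρ.prod ρ) ({c : H | h c (ptX ω) = k} ×ˢ {c : H | h c (ptX ω) = k})).toReal
          = p ω k ^ 2 := by
      intro k
      rw [Measure.prod_prod, ENNReal.toReal_mul, sq]
    rw [Finset.sum_congr rfl fun k _ => hterm k]
    simp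
  -- key pointwise inequality
  have hkey : ∀ ω, (W ω) ^ 2 + D ω / 2 ≤ (1 + ε) * W ω := by
    intro ω
    rw [hWp ω, hDp ω, hεdef]
    exact kclass_aux_ineq K hK (p ω) (hpnn ω) (hpsum ω) (ptY ω)
  -- measurability and bounds of W, D
  have hWmeas : Measurable W := by
    have : W = fun ω => (ρ ((fun c => (c, ω)) ⁻¹' {q : H × Ω | h q.1 (ptX q.2) ≠ ptY q.2})).toReal :=
      funext fun ω => hWdef ω
    rw [this]
    exact (measurable_measure_prodMk_right hjm).ennreal_toReal
  have hDmeas : Measurable D := by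
    have : D = fun ω => ((ρ.prod ρ) ((fun q => (q, ω)) ⁻¹'
        {q : (H × H) × Ω | h q.1.1 (ptX q.2) ≠ h q.1.2 (ptX q.2)})).toReal := rfl
    rw [this]
    exact (measurable_measure_prodMk_right hjm').ennreal_toReal
  have hW0 : ∀ ω, 0 ≤ W ω := fun ω => by rw [hWdef]; exact ENNReal.toReal_nonneg
  have hW1 : ∀ ω, W ω ≤ 1 := fun ω => by rw [hWdef]; exact kclass_toReal_prob_le_one ρ _
  have hD0 : ∀ ω, 0 ≤ D ω := fun ω => ENNReal.toReal_nonneg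
  have hD1 : ∀ ω, D ω ≤ 1 := fun ω => kclass_toReal_prob_le_one (ρ.prod ρ) _
  have hintW : Integrable W μ := kclass_integrable_of_bounded01 μ W hWmeas hW0 hW1
  have hintW2 : Integrable (fun ω => (W ω) ^ 2) μ :=
    kclass_integrable_of_bounded01 μ _ (hWmeas.pow_const 2)
      (fun ω => sq_nonneg _) (fun ω => by nlinarith [hW0 ω, hW1 ω])
  have hintD : Integrable D μ := kclass_integrable_of_bounded01 μ D hDmeas hD0 hD1
  -- integrate the key inequality
  have hint : ∫ ω, (W ω) ^ 2 ∂μ + (∫ ω, D ω ∂μ) / 2 ≤ (1 + ε) * ∫ ω, W ω ∂μ := by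
    have hmono : ∫ ω, ((W ω) ^ 2 + D ω / 2) ∂μ ≤ ∫ ω, (1 + ε) * W ω ∂μ :=
      integral_mono (hintW2.add (hintD.div_const 2)) (hintW.const_mul (1 + ε)) hkey
    rw [integral_add hintW2 (hintD.div_const 2), integral_div, integral_const_mul] at hmono
    exact hmono
  -- Fubini identities
  have hfubW : ∫ c, (μ {ω | h c (ptX ω) ≠ ptY ω}).toReal ∂ρ = ∫ ω, W ω ∂μ := by
    have h1 : ∫ c, (μ {ω | h c (ptX ω) ≠ ptY ω}).toReal ∂ρ
        = ((ρ.prod μ) {q : H × Ω | h q.1 (ptX q.2) ≠ ptY q.2}).toReal := by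
      rw [Measure.prod_apply hjm, ← integral_toReal
        ((measurable_measure_prodMk_left hjm).aemeasurable)
        (ae_of_all _ fun c => lt_of_le_of_lt prob_le_one ENNReal.one_lt_top)]
      rfl
    have h2 : ∫ ω, W ω ∂μ
        = ((ρ.prod μ) {q : H × Ω | h q.1 (ptX q.2) ≠ ptY q.2}).toReal := by
      rw [Measure.prod_apply_symm hjm, ← integral_toReal
        ((measurable_measure_prodMk_right hjm).aemeasurable)
        (ae_of_all _ fun ω => lt_of_le_of_lt prob_le_one ENNReal.one_lt_top)]
      exact integral_congr_ae (ae_of_all _ fun ω => hWdef ω)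
    rw [h1, h2]
  have hfubD : ∫ q, (μ {ω | h q.1 (ptX ω) ≠ h q.2 (ptX ω)}).toReal ∂(ρ.prod ρ)
      = ∫ ω, D ω ∂μ := by
    have h1 : ∫ q, (μ {ω | h q.1 (ptX ω) ≠ h q.2 (ptX ω)}).toReal ∂(ρ.prod ρ)
        = (((ρ.prod ρ).prod μ) {q : (H × H) × Ω | h q.1.1 (ptX q.2) ≠ h q.1.2 (ptX q.2)}).toReal := by
      rw [Measure.prod_apply hjm', ← integral_toReal
        ((measurable_measure_prodMk_left hjm').aemeasurable)
        (ae_of_all _ fun q => lt_of_le_of_lt prob_le_one ENNReal.one_lt_top)]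
      rfl
    have h2 : ∫ ω, D ω ∂μ
        = (((ρ.prod ρ).prod μ) {q : (H × H) × Ω | h q.1.1 (ptX q.2) ≠ h q.1.2 (ptX q.2)}).toReal := by
      rw [Measure.prod_apply_symm hjm', ← integral_toReal
        ((measurable_measure_prodMk_right hjm').aemeasurable)
        (ae_of_all _ fun ω => lt_of_le_of_lt prob_le_one ENNReal.one_lt_top)]
      rfl
    rw [h1, h2]
  -- conclude
  calc (μ {ω | hMV (ptX ω) ≠ ptY ω}).toReal
      ≤ (μ {ω | W ω > 1 / 2}).toReal := htiefree
    _ ≤ η * ∫ ω, (W ω) ^ 2 ∂μ := hpol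
    _ ≤ η * ((1 + ε) * (∫ ω, W ω ∂μ) - (1 / 2) * ∫ ω, D ω ∂μ) := by
        apply mul_le_mul_of_nonneg_left _ hη
        linarith [hint]
    _ = η * ((1 + ε) * (∫ c, (μ {ω | h c (ptX ω) ≠ ptY ω}).toReal ∂ρ) -
        (1 / 2) * ∫ q, (μ {ω | h q.1 (ptX ω) ≠ h q.2 (ptX ω)}).toReal ∂(ρ.prod ρ)) := by
        rw [hfubW, hfubD]
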